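/- arXiv:0810.5371 — 7 statements merged into one kernel-verified Lean document; each statement's English description precedes it below -/
import Mathlib

section
/- Consider the rank-2 numbers game with amplitude matrix given by M_{12} = -p and M_{21} = -q where p, q are positive reals with pq ≥ 4. Then from any position (a,b) with a > 0 and b > 0, no game sequence terminates: after every legal firing there remains a node with a positive number. -/
/-- Legality of a firing sequence in the two-node numbers game with amplitudes
`M₁₂ = -p`, `M₂₁ = -q`: `true` means firing node 1 (legal if the first entry is
positive, sending `(a,b)` to `(-a, b + q a)`); `false` means firing node 2
(legal if the second entry is positive, sending `(a,b)` to `(a + p b, -b)`). -/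
def legal2 (p q : ℝ) : ℝ × ℝ → List Bool → Prop
  | _, [] => True
  | x, true :: s => 0 < x.1 ∧ legal2 p q (-x.1, x.2 + q * x.1) s
  | x, false :: s => 0 < x.2 ∧ legal2 p q (x.1 + p * x.2, -x.2) s

/-- The result of playing a firing sequence in the two-node numbers game. -/
def play2 (p q : ℝ) : ℝ × ℝ → List Bool → ℝ × ℝ
  | x, [] => x
  | x, true :: s => play2 p q (-x.1, x.2 + q * x.1) s
  | x, false :: s => play2 p q (x.1 + p * x.2, -x.2) s

/-- Invariant for the two-node numbers game. -/
def inv2 (p q : ℝ) (x : ℝ × ℝ) : Prop :=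
  (0 < x.2 ∧ 0 ≤ 2 * x.1 + p * x.2) ∨ (0 < x.1 ∧ 0 ≤ 2 * x.2 + q * x.1)

lemma inv2_play (p q : ℝ) (hp : 0 < p) (hq : 0 < q) (hpq : 4 ≤ p * q) :
    ∀ s : List Bool, ∀ x : ℝ × ℝ, inv2 p q x → legal2 p q x s →
      inv2 p q (play2 p q x s) := by
  intro s
  induction s with
  | nil => intro x hx _; exact hx
  | cons hd tl ih =>
    intro x hx hleg
    cases hd with
    | true =>
      obtain ⟨h1, hleg'⟩ := hleg
      apply ih _ _ hleg'
      rcases hx with ⟨h2, h3⟩ | ⟨h2, h3⟩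
      · left
        constructor
        · simp only
          nlinarith
        · simp only
          nlinarith
      · left
        constructor
        · simp only
          nlinarith
        · simp only
          nlinarith
    | false =>
      obtain ⟨h1, hleg'⟩ := hleg
      apply ih _ _ hleg'
      rcases hx with ⟨h2, h3⟩ | ⟨h2, h3⟩
      · right
        constructor
        · simp only
          nlinarith
        · simp only
          nlinarith
      · right
        constructor
        · simp only
          nlinarith
        · simp only
          nlinarith

/-- In the rank-2 numbers game with amplitudes `-p, -q` where `p q ≥ 4`, from any
position `(a,b)` with `a > 0` and `b > 0` no game sequence terminates: after any
legal firing sequence there is still a node with a positive number. -/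
theorem stmt4 (p q a b : ℝ) (hp : 0 < p) (hq : 0 < q) (hpq : 4 ≤ p * q)
    (ha : 0 < a) (hb : 0 < b) :
    ∀ s : List Bool, legal2 p q (a, b) s →
      0 < (play2 p q (a, b) s).1 ∨ 0 < (play2 p q (a, b) s).2 := by
  intro s hleg
  have hinv : inv2 p q (a, b) := by
    left; constructor <;> simp only <;> nlinarith
  have h := inv2_play p q hp hq hpq s (a, b) hinv hleg
  rcases h with ⟨h1, _⟩ | ⟨h1, _⟩
  · right; exact h1
  · left; exact h1
end

section
/- Suppose in the numbers game on an E-GCM graph there is a looping game: a nonempty legal sequence of node firings from a position λ that returns to λ. If A = 2I - M is nonnegative indecomposable with positive eigenvector ν for eigenvalue ρ(A), then ρ(A) = 2. -/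
/-
If `M ν = c ν` with `ν > 0` and `c ≠ 0`, firing a node `i` with `μᵢ > 0` lowers
`c (μ ⬝ ν)` by `c² μᵢ νᵢ > 0`. So this quantity strictly decreases along every nonempty
legal game and no game can loop. For `M = 2I - A` and `A ν = ρ ν` we have `c = 2 - ρ`.
-/

/-- Indecomposability (irreducibility) of a square matrix. -/
def Indecomposable {n : ℕ} (A : Matrix (Fin n) (Fin n) ℝ) : Prop :=
  ¬ ∃ S : Set (Fin n), S.Nonempty ∧ Sᶜ.Nonempty ∧ ∀ i ∈ S, ∀ j ∈ Sᶜ, A i j = 0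

/-- Firing node `i` from position `lam` in the numbers game on matrix `M`. -/
def fireR {n : ℕ} (M : Matrix (Fin n) (Fin n) ℝ) (i : Fin n) (lam : Fin n → ℝ) :
    Fin n → ℝ :=
  fun j => lam j - M i j * lam i

/-- Legality of a firing sequence. -/
def legalSeqR {n : ℕ} (M : Matrix (Fin n) (Fin n) ℝ) :
    (Fin n → ℝ) → List (Fin n) → Prop
  | _, [] => True
  | lam, i :: s => 0 < lam i ∧ legalSeqR M (fireR M i lam) s

/-- Resulting position of a firing sequence. -/
def playSeqR {n : ℕ} (M : Matrix (Fin n) (Fin n) ℝ) :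
    (Fin n → ℝ) → List (Fin n) → (Fin n → ℝ)
  | lam, [] => lam
  | lam, i :: s => playSeqR M (fireR M i lam) s

namespace NumbersGame

open Matrix

variable {n : ℕ} {M : Matrix (Fin n) (Fin n) ℝ}

theorem fireR_dotProduct (i : Fin n) (μ ν : Fin n → ℝ) :
    fireR M i μ ⬝ᵥ ν = μ ⬝ᵥ ν - μ i * (M *ᵥ ν) i := by
  simp only [fireR, dotProduct, mulVec, sub_mul, Finset.sum_sub_distrib, Finset.mul_sum]
  congr 1
  exact Finset.sum_congr rfl fun j _ => by ring

variable {φ : (Fin n → ℝ) → ℝ}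

theorem potential_playSeqR_le (hφ : ∀ i μ, 0 < μ i → φ (fireR M i μ) < φ μ) :
    ∀ (s : List (Fin n)) (μ : Fin n → ℝ), legalSeqR M μ s → φ (playSeqR M μ s) ≤ φ μ
  | [], _, _ => le_rfl
  | i :: s, μ, ⟨hpos, hleg⟩ =>
    (potential_playSeqR_le hφ s _ hleg).trans (hφ i μ hpos).le

theorem potential_playSeqR_lt (hφ : ∀ i μ, 0 < μ i → φ (fireR M i μ) < φ μ)
    {s : List (Fin n)} {μ : Fin n → ℝ} (hs : s ≠ []) (hleg : legalSeqR M μ s) :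
    φ (playSeqR M μ s) < φ μ := by
  obtain ⟨i, t, rfl⟩ := List.exists_cons_of_ne_nil hs
  exact (potential_playSeqR_le hφ t _ hleg.2).trans_lt (hφ i μ hleg.1)

theorem playSeqR_ne_of_mulVec_eq_smul {ν : Fin n → ℝ} (hν : ∀ i, 0 < ν i) {c : ℝ}
    (hc : c ≠ 0) (hMν : M *ᵥ ν = c • ν) {μ : Fin n → ℝ} {s : List (Fin n)} (hs : s ≠ [])
    (hleg : legalSeqR M μ s) : playSeqR M μ s ≠ μ := by
  have hdecr : ∀ i x, 0 < x i → c * (fireR M i x ⬝ᵥ ν) < c * (x ⬝ᵥ ν) := by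
    intro i x hx
    have hdrop : 0 < c ^ 2 * (x i * ν i) := mul_pos (sq_pos_of_ne_zero hc) (mul_pos hx (hν i))
    rw [fireR_dotProduct, hMν, Pi.smul_apply, smul_eq_mul]
    linarith
  intro hloop
  have hlt := potential_playSeqR_lt (φ := fun x => c * (x ⬝ᵥ ν)) hdecr hs hleg
  exact hlt.ne (by rw [hloop])

end NumbersGame

theorem stmt6_general {n : ℕ} (M A : Matrix (Fin n) (Fin n) ℝ)
    (hA : A = 2 • (1 : Matrix (Fin n) (Fin n) ℝ) - M)
    (ρ : ℝ) (ν : Fin n → ℝ) (hν : ∀ i, 0 < ν i) (heig : A.mulVec ν = ρ • ν)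
    (lam : Fin n → ℝ) (s : List (Fin n)) (hne : s ≠ [])
    (hleg : legalSeqR M lam s) (hloop : playSeqR M lam s = lam) :
    ρ = 2 := by
  have hMν : M.mulVec ν = (2 - ρ) • ν := by
    have hM : M = 2 • (1 : Matrix (Fin n) (Fin n) ℝ) - A := by rw [hA, sub_sub_cancel]
    rw [hM, Matrix.sub_mulVec, Matrix.smul_mulVec, Matrix.one_mulVec, heig]
    module
  by_contra hρ
  exact NumbersGame.playSeqR_ne_of_mulVec_eq_smul hν (sub_ne_zero.mpr (Ne.symm hρ)) hMν hne hleg hloop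

/-- If there is a looping game on the numbers game for `M` (a nonempty legal firing
sequence from `lam` returning to `lam`), and `A = 2I - M` is nonnegative and
indecomposable with a positive eigenvector `ν` for the eigenvalue `ρ = ρ(A)`,
then `ρ = 2`. -/
theorem stmt6 {n : ℕ} (M A : Matrix (Fin n) (Fin n) ℝ)
    (hA : A = 2 • (1 : Matrix (Fin n) (Fin n) ℝ) - M)
    (hnn : ∀ i j, 0 ≤ A i j) (hind : Indecomposable A)
    (ρ : ℝ) (ν : Fin n → ℝ) (hν : ∀ i, 0 < ν i) (heig : A.mulVec ν = ρ • ν)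
    (lam : Fin n → ℝ) (s : List (Fin n)) (hne : s ≠ [])
    (hleg : legalSeqR M lam s) (hloop : playSeqR M lam s = lam) :
    ρ = 2 :=
  stmt6_general M A hA ρ ν hν heig lam s hne hleg hloop
end

section
/- Let M be a real n×n matrix, B = -Mᵀ, and suppose D is a diagonal matrix with positive diagonal entries such that D B⁻¹ is symmetric. If position μ' is obtained from μ by legally firing node i (so μ' = μ + μ_i B e_i with μ_i > 0 and M_{ii} = 2), then μ'ᵀ D B⁻¹ μ' = μᵀ D B⁻¹ μ; i.e., the quadratic form μ ↦ μᵀ D B⁻¹ μ is invariant under legal node firings. -/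
open Matrix

/-!
Put `A = D B⁻¹`, which is symmetric with `A B = D` diagonal. Since `Bᵀ A = (A B)ᵀ = D`,
firing node `i` (adding `c B eᵢ` with `c = μᵢ`) changes `μᵀ A μ` by
`2 c Dᵢᵢ μᵢ + c² Dᵢᵢ Bᵢᵢ = Dᵢᵢ μᵢ² (2 + Bᵢᵢ)`, which vanishes because `Bᵢᵢ = -Mᵢᵢ = -2`.
-/

namespace Matrix.IsSymm

variable {n R : Type*} [Fintype n] [CommRing R] {A : Matrix n n R}

theorem add_dotProduct_mulVec_add (hA : A.IsSymm) (v w : n → R) :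
    (v + w) ⬝ᵥ A *ᵥ (v + w) = v ⬝ᵥ A *ᵥ v + 2 * (w ⬝ᵥ A *ᵥ v) + w ⬝ᵥ A *ᵥ w := by
  have hcross : v ⬝ᵥ A *ᵥ w = w ⬝ᵥ A *ᵥ v := by
    rw [dotProduct_mulVec, ← mulVec_transpose, hA.eq, dotProduct_comm]
  simp only [mulVec_add, dotProduct_add, add_dotProduct, hcross]
  ring

theorem mulVec_dotProduct_mulVec (hA : A.IsSymm) (B : Matrix n n R) (v w : n → R) :
    (B *ᵥ w) ⬝ᵥ A *ᵥ v = v ⬝ᵥ (A * B) *ᵥ w := by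
  rw [← mulVec_mulVec, dotProduct_mulVec, ← mulVec_transpose, hA.eq, dotProduct_comm]

theorem add_mulVec_single_dotProduct_mulVec [DecidableEq n] (hA : A.IsSymm)
    {B : Matrix n n R} {d : n → R} (hAB : A * B = diagonal d) (v : n → R) (i : n) (c : R) :
    (v + B *ᵥ Pi.single i c) ⬝ᵥ A *ᵥ (v + B *ᵥ Pi.single i c) =
      v ⬝ᵥ A *ᵥ v + c * d i * (2 * v i + c * B i i) := by
  rw [hA.add_dotProduct_mulVec_add, hA.mulVec_dotProduct_mulVec, hA.mulVec_dotProduct_mulVec,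
    hAB, diagonal_mulVec_single, dotProduct_single, dotProduct_single]
  rw [show (B *ᵥ Pi.single i c) i = B i i * c from dotProduct_single _ _ _]
  ring

end Matrix.IsSymm

theorem stmt7_general {n : ℕ} (M : Matrix (Fin n) (Fin n) ℝ) (hdiag : ∀ i, M i i = 2)
    (hinv : IsUnit (-Mᵀ).det)
    (D : Matrix (Fin n) (Fin n) ℝ) (hDoff : ∀ i j, i ≠ j → D i j = 0)
    (hsymm : (D * (-Mᵀ)⁻¹).IsSymm)
    (μ : Fin n → ℝ) (i : Fin n) :
    dotProduct (fun j => μ j - M i j * μ i)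
        ((D * (-Mᵀ)⁻¹).mulVec (fun j => μ j - M i j * μ i)) =
      dotProduct μ ((D * (-Mᵀ)⁻¹).mulVec μ) := by
  have hAB : D * (-Mᵀ)⁻¹ * -Mᵀ = diagonal D.diag := by
    rw [nonsing_inv_mul_cancel_right _ _ hinv, IsDiag.diagonal_diag hDoff]
  have hfire : (fun j => μ j - M i j * μ i) = μ + (-Mᵀ) *ᵥ Pi.single i (μ i) := by
    ext j
    simp [mulVec_single, sub_eq_add_neg, mul_comm]
  rw [hfire, hsymm.add_mulVec_single_dotProduct_mulVec hAB, neg_apply, transpose_apply, hdiag]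
  ring

/-- Let `M` have diagonal entries 2, `B = -Mᵀ` be invertible, and `D` be a diagonal
matrix with positive diagonal entries such that `D B⁻¹` is symmetric.  If `μ'` is
obtained from `μ` by legally firing node `i` (so `μ'_j = μ_j - M_{ij} μ_i`, i.e.
`μ' = μ + μ_i B e_i`, with `μ_i > 0`), then the quadratic form
`x ↦ xᵀ D B⁻¹ x` takes the same value at `μ'` as at `μ`. -/
theorem stmt7 {n : ℕ} (M : Matrix (Fin n) (Fin n) ℝ) (hdiag : ∀ i, M i i = 2)
    (hinv : IsUnit (-Mᵀ).det)
    (D : Matrix (Fin n) (Fin n) ℝ) (hDoff : ∀ i j, i ≠ j → D i j = 0)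
    (hDpos : ∀ i, 0 < D i i) (hsymm : (D * (-Mᵀ)⁻¹).IsSymm)
    (μ : Fin n → ℝ) (i : Fin n) (hi : 0 < μ i) :
    dotProduct (fun j => μ j - M i j * μ i)
        ((D * (-Mᵀ)⁻¹).mulVec (fun j => μ j - M i j * μ i)) =
      dotProduct μ ((D * (-Mᵀ)⁻¹).mulVec μ) :=
  stmt7_general M hdiag hinv D hDoff hsymm μ i
end

section
/- Let Γ be a finite acyclic simple graph (a forest) on vertices {1,...,n}, and let A be a nonnegative matrix with A_{ii} = 0 and A_{ij} > 0 iff i ~ j in Γ. Let A^sym be the symmetric nonnegative matrix with (A^sym)_{ij} = sqrt(A_{ij} A_{ji}). Then A and A^sym have the same characteristic polynomial; in particular all eigenvalues of A are real. -/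
/-!
Expand `det (X - A)` and `det (X - A^sym)` over permutations. A permutation `σ` contributes only
if every moved point `i` is adjacent to `σ i`; in a forest this forces `σ` to be an involution,
because the rest of a longer `σ`-cycle through `i` would join `i` and `σ i` around the bridge
`{i, σ i}`. The term of an involution involves only diagonal entries and the products
`A i j * A j i` over its transpositions, and these coincide for `A` and `A^sym`. Finally `A^sym` is
real symmetric, so the roots of its characteristic polynomial are real.
-/

open Polynomial Matrix

namespace SimpleGraph

variable {V : Type*} {G : SimpleGraph V}

theorem reachable_iterate_of_adj {f : V → V} {x : V} :
    ∀ {a : ℕ}, (∀ m < a, G.Adj (f^[m] x) (f^[m + 1] x)) → G.Reachable x (f^[a] x)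
  | 0, _ => .refl x
  | a + 1, h => (reachable_iterate_of_adj fun m hm => h m (by omega)).trans
      (h a (by omega)).reachable

theorem IsAcyclic.involutive_of_forall_adj [Finite V] (hG : G.IsAcyclic) {σ : Equiv.Perm V}
    (hσ : ∀ v, σ v ≠ v → G.Adj v (σ v)) : Function.Involutive σ := by
  intro i
  by_contra hii
  have hi : σ i ≠ i := fun h => hii (by rw [h, h])
  set k := Function.minimalPeriod σ i
  have hk : 0 < k := Function.minimalPeriod_pos_of_mem_periodicPts <|
    (Function.injective_iff_periodicPts_eq_univ.mp σ.injective).symm ▸ Set.mem_univ i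
  have hmin : ∀ m, 0 < m → m < k → σ^[m] i ≠ i := fun m h0 hlt =>
    Function.not_isPeriodicPt_of_pos_of_lt_minimalPeriod h0.ne' hlt
  have hcycle : σ^[k - 1] (σ i) = i := by
    rw [← Function.iterate_succ_apply, Nat.succ_eq_add_one, Nat.sub_add_cancel hk]
    exact Function.iterate_minimalPeriod
  refine isBridge_iff.mp (isAcyclic_iff_forall_adj_isBridge.mp hG (hσ i hi)) ?_
  suffices h : (G.deleteEdges {s(i, σ i)}).Reachable (σ i) (σ^[k - 1] (σ i)) by
    rw [hcycle] at h
    exact h.symm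
  refine reachable_iterate_of_adj fun m hm => ?_
  rw [← Function.iterate_succ_apply, ← Function.iterate_succ_apply,
    Function.iterate_succ_apply' σ (m + 1)]
  have hmove : σ (σ^[m + 1] i) ≠ σ^[m + 1] i := fun h => hi <| σ.injective.iterate (m + 1) <| by
    rw [← Function.iterate_succ_apply σ, Function.iterate_succ_apply' σ, h]
  refine deleteEdges_adj.mpr ⟨hσ _ hmove, fun he => ?_⟩
  rcases Sym2.eq_iff.mp (Set.mem_singleton_iff.mp he) with ⟨h1, -⟩ | ⟨h1, h2⟩
  · exact hmin (m + 1) (by omega) (by omega) h1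
  · rcases Nat.eq_zero_or_pos m with rfl | hm0
    · exact hii h2
    · exact hmin m hm0 (by omega) <|
        σ.injective ((Function.iterate_succ_apply' σ m i).symm.trans h1)

end SimpleGraph

theorem Finset.prod_univ_eq_prod_lt_mul_prod_fixed {ι M : Type*} [Fintype ι] [LinearOrder ι]
    [CommMonoid M] {σ : ι → ι} (hσ : Function.Involutive σ) (f : ι → M) :
    ∏ i, f i = (∏ i with i < σ i, f i * f (σ i)) * ∏ i with σ i = i, f i := by
  have hswap : ∏ i with σ i < i, f i = ∏ i with i < σ i, f (σ i) :=
    prod_nbij' σ σ (by simp [hσ _]) (by simp [hσ _]) (fun i _ => hσ i) (fun i _ => hσ i)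
      (by simp [hσ _])
  rw [prod_mul_distrib, ← hswap, ← prod_filter_mul_prod_filter_not univ (fun i => i < σ i),
    ← prod_filter_mul_prod_filter_not (univ.filter fun i => ¬ i < σ i) (fun i => σ i = i),
    filter_filter, filter_filter]
  have hfix : univ.filter (fun i => ¬ i < σ i ∧ σ i = i) = univ.filter (fun i => σ i = i) :=
    filter_congr fun i _ => by grind
  have hlt : univ.filter (fun i => ¬ i < σ i ∧ ¬ σ i = i) = univ.filter (fun i => σ i < i) :=
    filter_congr fun i _ => by grind
  rw [hfix, hlt, mul_right_comm, mul_assoc]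

namespace Matrix

variable {n : Type*} [Fintype n] {G : SimpleGraph n}

theorem prod_perm_eq_zero_of_isAcyclic {R : Type*} [CommMonoidWithZero R] {M : Matrix n n R}
    (hG : G.IsAcyclic) (hM : ∀ i j, i ≠ j → M i j ≠ 0 → G.Adj i j) {σ : Equiv.Perm n}
    (hσ : ¬ Function.Involutive σ) : ∏ i, M (σ i) i = 0 := by
  by_contra h
  refine hσ (hG.involutive_of_forall_adj fun i hi => (hM _ _ hi fun h0 => h ?_).symm)
  exact Finset.prod_eq_zero (Finset.mem_univ i) h0

variable [DecidableEq n] {R : Type*} [CommRing R] {M N : Matrix n n R}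

theorem det_eq_of_isAcyclic (hG : G.IsAcyclic)
    (hM : ∀ i j, i ≠ j → M i j ≠ 0 → G.Adj i j) (hN : ∀ i j, i ≠ j → N i j ≠ 0 → G.Adj i j)
    (hdiag : ∀ i, M i i = N i i) (hpair : ∀ i j, i ≠ j → M i j * M j i = N i j * N j i) :
    M.det = N.det := by
  let : LinearOrder n := LinearOrder.lift' (Fintype.equivFin n) (Fintype.equivFin n).injective
  rw [det_apply, det_apply]
  refine Finset.sum_congr rfl fun σ _ => ?_
  by_cases hσ : Function.Involutive σ
  · rw [Finset.prod_univ_eq_prod_lt_mul_prod_fixed hσ,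
      Finset.prod_univ_eq_prod_lt_mul_prod_fixed hσ]
    congr 1
    refine congr_arg₂ (· * ·) (Finset.prod_congr rfl fun i hi => ?_)
      (Finset.prod_congr rfl fun i hi => ?_)
    · rw [hσ i]
      exact hpair _ _ (Finset.mem_filter.mp hi).2.ne'
    · simp only [Finset.mem_filter] at hi
      rw [hi.2]
      exact hdiag i
  · rw [prod_perm_eq_zero_of_isAcyclic hG hM hσ, prod_perm_eq_zero_of_isAcyclic hG hN hσ]

theorem charpoly_eq_of_isAcyclic (hG : G.IsAcyclic)
    (hM : ∀ i j, i ≠ j → M i j ≠ 0 → G.Adj i j) (hN : ∀ i j, i ≠ j → N i j ≠ 0 → G.Adj i j)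
    (hdiag : ∀ i, M i i = N i i) (hpair : ∀ i j, i ≠ j → M i j * M j i = N i j * N j i) :
    M.charpoly = N.charpoly :=
  det_eq_of_isAcyclic hG
    (fun i j hij h => hM i j hij (by simpa [charmatrix_apply_ne _ _ _ hij] using h))
    (fun i j hij h => hN i j hij (by simpa [charmatrix_apply_ne _ _ _ hij] using h))
    (fun i => by rw [charmatrix_apply_eq, charmatrix_apply_eq, hdiag])
    (fun i j hij => by
      simp only [charmatrix_apply_ne _ _ _ hij, charmatrix_apply_ne _ _ _ hij.symm, neg_mul_neg,
        ← C_mul, hpair i j hij])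

theorem IsSymm.im_eq_zero_of_isRoot_charpoly_map {A : Matrix n n ℝ} (hA : A.IsSymm) {μ : ℂ}
    (hμ : (A.map ((↑) : ℝ → ℂ)).charpoly.IsRoot μ) : μ.im = 0 := by
  have hH : (A.map ((↑) : ℝ → ℂ)).IsHermitian :=
    (isHermitian_iff_isSymm.mpr hA).map _ fun x => (Complex.conj_ofReal x).symm
  rw [← mem_roots (charpoly_monic _).ne_zero, hH.roots_charpoly_eq_eigenvalues] at hμ
  obtain ⟨i, -, rfl⟩ := Multiset.mem_map.mp hμ
  simp

end Matrix

theorem stmt10_general {n : ℕ} (G : SimpleGraph (Fin n)) (hac : G.IsAcyclic)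
    (A : Matrix (Fin n) (Fin n) ℝ) (hnn : ∀ i j, 0 ≤ A i j)
    (hadj : ∀ i j, 0 < A i j ↔ G.Adj i j) :
    A.charpoly = (Matrix.of fun i j => Real.sqrt (A i j * A j i)).charpoly ∧
      ∀ μ : ℂ, ((A.map ((↑) : ℝ → ℂ)).charpoly).IsRoot μ → μ.im = 0 := by
  set B : Matrix (Fin n) (Fin n) ℝ := Matrix.of fun i j => Real.sqrt (A i j * A j i)
  have hB : B.IsSymm := IsSymm.ext fun i j => by simp only [B, of_apply, mul_comm]
  have hcharpoly : A.charpoly = B.charpoly := by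
    refine charpoly_eq_of_isAcyclic hac (fun i j _ h => (hadj i j).mp ((hnn i j).lt_of_ne' h))
      (fun i j _ h => (hadj i j).mp ((hnn i j).lt_of_ne' fun h0 => h (by simp [B, h0])))
      (fun i => (Real.sqrt_mul_self (hnn i i)).symm) (fun i j _ => ?_)
    simp only [B, of_apply, mul_comm (A j i)]
    exact (Real.mul_self_sqrt (mul_nonneg (hnn i j) (hnn j i))).symm
  refine ⟨hcharpoly, fun μ hμ => hB.im_eq_zero_of_isRoot_charpoly_map ?_⟩
  have hmap := charpoly_map A Complex.ofRealHom
  rw [hcharpoly, ← charpoly_map] at hmap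
  exact hmap ▸ hμ

/-- Let `Γ` be a finite acyclic simple graph (a forest) on `{1,…,n}` and `A` a
nonnegative matrix with zero diagonal and `A i j > 0` iff `i ~ j` in `Γ`.
Let `A^sym` be the symmetric matrix with entries `√(A i j * A j i)`.  Then `A`
and `A^sym` have the same characteristic polynomial; in particular all (complex)
eigenvalues of `A` are real. -/
theorem stmt10 {n : ℕ} (G : SimpleGraph (Fin n)) (hac : G.IsAcyclic)
    (A : Matrix (Fin n) (Fin n) ℝ) (hnn : ∀ i j, 0 ≤ A i j)
    (hdiag : ∀ i, A i i = 0) (hadj : ∀ i j, 0 < A i j ↔ G.Adj i j) :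
    A.charpoly = (Matrix.of fun i j => Real.sqrt (A i j * A j i)).charpoly ∧
      ∀ μ : ℂ, ((A.map ((↑) : ℝ → ℂ)).charpoly).IsRoot μ → μ.im = 0 :=
  stmt10_general G hac A hnn hadj
end

section
/- Let M be the n×n Cartan matrix of type A_n (M_{ii} = 2, M_{i,i+1} = M_{i+1,i} = -1, all other entries 0). For any strongly dominant position (a₁,...,a_n) (all a_i > 0), there is a legal firing sequence of exactly n(n+1)/2 node firings in the numbers game on M that reaches the terminal position (-a_n, ..., -a₂, -a₁). -/
namespace Stmt16Aux

variable {n : ℕ}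

lemma legalSeqR_append (M : Matrix (Fin n) (Fin n) ℝ) (s t : List (Fin n)) :
    ∀ lam, legalSeqR M lam (s ++ t) ↔
      legalSeqR M lam s ∧ legalSeqR M (playSeqR M lam s) t := by
  induction s with
  | nil => intro lam; simp [legalSeqR, playSeqR]
  | cons i s ih => intro lam; simp [legalSeqR, playSeqR, ih, and_assoc]

lemma playSeqR_append (M : Matrix (Fin n) (Fin n) ℝ) (s t : List (Fin n)) :
    ∀ lam, playSeqR M lam (s ++ t) = playSeqR M (playSeqR M lam s) t := by
  induction s with
  | nil => intro lam; simp [playSeqR]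
  | cons i s ih => intro lam; simp [playSeqR, ih]

/-- Position given by successive differences of `b`. -/
def toLam (n : ℕ) (b : ℕ → ℝ) : Fin n → ℝ := fun i => b i - b (i + 1)

/-- Swap values at positions `i` and `i+1`. -/
def swapNat (i : ℕ) (b : ℕ → ℝ) : ℕ → ℝ := fun p =>
  if p = i then b (i + 1) else if p = i + 1 then b i else b p

lemma fire_toLam (M : Matrix (Fin n) (Fin n) ℝ)
    (hM : ∀ i j, M i j =
      if i = j then 2
      else if i.val + 1 = j.val ∨ j.val + 1 = i.val then -1 else 0)
    (i : Fin n) (b : ℕ → ℝ) :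
    fireR M i (toLam n b) = toLam n (swapNat i b) := by
  funext j
  simp only [fireR, toLam, swapNat]
  rw [hM i j]
  by_cases h1 : i = j
  · subst h1
    rw [if_pos rfl, if_pos rfl,
      if_neg (by omega : ¬ ((i : ℕ) + 1 = (i : ℕ))), if_pos rfl]
    ring
  · have hv : (i : ℕ) ≠ (j : ℕ) := fun h => h1 (Fin.ext h)
    rw [if_neg h1]
    by_cases h2 : (i : ℕ) + 1 = (j : ℕ)
    · rw [if_pos (Or.inl h2),
        if_neg (by omega : ¬ ((j : ℕ) = (i : ℕ))),
        if_pos h2.symm,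
        if_neg (by omega : ¬ ((j : ℕ) + 1 = (i : ℕ))),
        if_neg (by omega : ¬ ((j : ℕ) + 1 = (i : ℕ) + 1)),
        show (j : ℕ) = (i : ℕ) + 1 from h2.symm]
      ring
    · by_cases h3 : (j : ℕ) + 1 = (i : ℕ)
      · rw [if_pos (Or.inr h3),
          if_neg (by omega : ¬ ((j : ℕ) = (i : ℕ))),
          if_neg (by omega : ¬ ((j : ℕ) = (i : ℕ) + 1)),
          if_pos h3,
          show (i : ℕ) = (j : ℕ) + 1 from h3.symm]
        ring
      · rw [if_neg (by tauto : ¬ ((i : ℕ) + 1 = (j : ℕ) ∨ (j : ℕ) + 1 = (i : ℕ))),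
          if_neg (by omega : ¬ ((j : ℕ) = (i : ℕ))),
          if_neg (by omega : ¬ ((j : ℕ) = (i : ℕ) + 1)),
          if_neg (by omega : ¬ ((j : ℕ) + 1 = (i : ℕ))),
          if_neg (by omega : ¬ ((j : ℕ) + 1 = (i : ℕ) + 1))]
        ring

lemma b_lt (b : ℕ → ℝ) (hb : ∀ p, p < n → b (p + 1) < b p) :
    ∀ p q, p < q → q ≤ n → b q < b p := by
  intro p q h hq
  induction q with
  | zero => omega
  | succ q ih =>
    rcases Nat.lt_succ_iff_lt_or_eq.mp h with h' | h'
    · exact (hb q (by omega)).trans (ih h' (by omega))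
    · subst h'; exact hb p (by omega)

/-- `b` with the first `k+1` entries reversed. -/
def revPrefix (k : ℕ) (b : ℕ → ℝ) : ℕ → ℝ := fun p =>
  if p ≤ k then b (k - p) else b p

/-- Intermediate state inside block `k`, with firings `k, k-1, …, m` still to do. -/
def midState (k m : ℕ) (b : ℕ → ℝ) : ℕ → ℝ := fun p =>
  if p < m then b (k - p)
  else if p = m then b (k + 1)
  else if p ≤ k + 1 then b (k + 1 - p)
  else b p

lemma swap_mid (k m : ℕ) (hm : m ≤ k) (b : ℕ → ℝ) :
    swapNat m (midState k (m + 1) b) = midState k m b := by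
  funext p
  simp only [swapNat, midState]
  split_ifs <;> exact congrArg b (by omega)

lemma inner (M : Matrix (Fin n) (Fin n) ℝ)
    (hM : ∀ i j, M i j =
      if i = j then 2
      else if i.val + 1 = j.val ∨ j.val + 1 = i.val then -1 else 0)
    (b : ℕ → ℝ) (hb : ∀ p, p < n → b (p + 1) < b p)
    (k : ℕ) (hk : k + 1 ≤ n) :
    ∀ m, m ≤ k + 1 → ∃ s : List (Fin n), s.length = m ∧
      legalSeqR M (toLam n (midState k m b)) s ∧
      playSeqR M (toLam n (midState k m b)) s = toLam n (midState k 0 b) := by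
  intro m
  induction m with
  | zero => exact fun _ => ⟨[], rfl, trivial, rfl⟩
  | succ m ih =>
    intro hm1
    obtain ⟨s, hlen, hleg, hplay⟩ := ih (by omega)
    have hmn : m < n := by omega
    set i : Fin n := ⟨m, hmn⟩ with hi
    have hiv : (i : ℕ) = m := rfl
    have hkey : fireR M i (toLam n (midState k (m + 1) b)) = toLam n (midState k m b) := by
      rw [fire_toLam M hM i, hiv, swap_mid k m (by omega) b]
    have hpos : 0 < toLam n (midState k (m + 1) b) i := by
      have hv : toLam n (midState k (m + 1) b) i = b (k - m) - b (k + 1) := by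
        simp only [toLam, midState, hiv]
        rw [if_pos (by omega : m < m + 1), if_neg (by omega : ¬ (m + 1 < m + 1))]
        simp
      rw [hv, sub_pos]
      exact b_lt b hb (k - m) (k + 1) (by omega) hk
    refine ⟨i :: s, by simp [hlen], ⟨hpos, ?_⟩, ?_⟩
    · rw [hkey]; exact hleg
    · show playSeqR M (fireR M i (toLam n (midState k (m + 1) b))) s = _
      rw [hkey]; exact hplay

lemma mid_top (k : ℕ) (b : ℕ → ℝ) :
    midState k (k + 1) b = revPrefix k b := by
  funext p
  simp only [midState, revPrefix]
  split_ifs <;> exact congrArg b (by omega)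

lemma mid_bot (k : ℕ) (b : ℕ → ℝ) :
    midState k 0 b = revPrefix (k + 1) b := by
  funext p
  simp only [midState, revPrefix]
  split_ifs <;> exact congrArg b (by omega)

lemma rev_zero (b : ℕ → ℝ) : revPrefix 0 b = b := by
  funext p
  simp only [revPrefix]
  split_ifs <;> exact congrArg b (by omega)

lemma triangle (k : ℕ) : k * (k + 1) / 2 + (k + 1) = (k + 1) * (k + 1 + 1) / 2 := by
  have h : (k + 1) * (k + 1 + 1) = k * (k + 1) + 2 * (k + 1) := by ring
  have h2 : 2 ∣ k * (k + 1) := (Nat.even_mul_succ_self k).two_dvd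
  omega

lemma outer (M : Matrix (Fin n) (Fin n) ℝ)
    (hM : ∀ i j, M i j =
      if i = j then 2
      else if i.val + 1 = j.val ∨ j.val + 1 = i.val then -1 else 0)
    (b : ℕ → ℝ) (hb : ∀ p, p < n → b (p + 1) < b p) :
    ∀ k, k ≤ n → ∃ s : List (Fin n), s.length = k * (k + 1) / 2 ∧
      legalSeqR M (toLam n b) s ∧
      playSeqR M (toLam n b) s = toLam n (revPrefix k b) := by
  intro k
  induction k with
  | zero => exact fun _ => ⟨[], rfl, trivial, by rw [rev_zero]; rfl⟩
  | succ k ih =>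
    intro hk1
    obtain ⟨s, hlen, hleg, hplay⟩ := ih (by omega)
    obtain ⟨t, tlen, tleg, tplay⟩ := inner M hM b hb k hk1 (k + 1) le_rfl
    rw [mid_top] at tleg tplay
    rw [mid_bot] at tplay
    refine ⟨s ++ t, ?_, ?_, ?_⟩
    · rw [List.length_append, hlen, tlen, triangle]
    · rw [legalSeqR_append]
      exact ⟨hleg, by rw [hplay]; exact tleg⟩
    · rw [playSeqR_append, hplay, tplay]

end Stmt16Aux

open Stmt16Aux in
/-- For the type `Aₙ` Cartan matrix and any strongly dominant position
`(a₁,…,aₙ)`, there is a legal firing sequence of exactly `n(n+1)/2` firings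
reaching the terminal position `(-aₙ,…,-a₂,-a₁)`. -/
theorem stmt16 {n : ℕ} (M : Matrix (Fin n) (Fin n) ℝ)
    (hM : ∀ i j, M i j =
      if i = j then 2
      else if i.val + 1 = j.val ∨ j.val + 1 = i.val then -1 else 0)
    (a : Fin n → ℝ) (ha : ∀ i, 0 < a i) :
    ∃ s : List (Fin n), s.length = n * (n + 1) / 2 ∧ legalSeqR M a s ∧
      playSeqR M a s = (fun i => -a i.rev) ∧
      ∀ j, playSeqR M a s j ≤ 0 := by
  set b : ℕ → ℝ := fun p => -(∑ j : Fin n, if (j : ℕ) < p then a j else 0) with hbdef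
  have key : ∀ p, (hp : p < n) → b p - b (p + 1) = a ⟨p, hp⟩ := by
    intro p hp
    have : b p - b (p + 1)
        = ∑ j : Fin n, ((if (j : ℕ) < p + 1 then a j else 0)
            - (if (j : ℕ) < p then a j else 0)) := by
      rw [Finset.sum_sub_distrib, hbdef]; ring
    have step : ∀ j : Fin n, (if (j : ℕ) < p + 1 then a j else 0)
        - (if (j : ℕ) < p then a j else 0) = if j = (⟨p, hp⟩ : Fin n) then a j else 0 := by
      intro j
      by_cases h : j = (⟨p, hp⟩ : Fin n)
      · subst h; simp
      · have hj : (j : ℕ) ≠ p := fun hh => h (Fin.ext hh)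
        by_cases h2 : (j : ℕ) < p
        · rw [if_pos (by omega : (j : ℕ) < p + 1), if_pos h2, if_neg h]; ring
        · rw [if_neg (by omega : ¬ ((j : ℕ) < p + 1)), if_neg h2, if_neg h]; ring
    rw [this, Finset.sum_congr rfl (fun j _ => step j)]
    simp
  have hb : ∀ p, p < n → b (p + 1) < b p := by
    intro p hp
    have h1 := key p hp
    have h2 := ha ⟨p, hp⟩
    linarith
  have hab : toLam n b = a := by
    funext i
    show b i - b (i + 1) = a i
    rw [key i i.isLt]
  obtain ⟨s, hlen, hleg, hplay⟩ := outer M hM b hb n le_rfl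
  rw [hab] at hleg hplay
  have hfinal : toLam n (revPrefix n b) = fun i => -a i.rev := by
    funext i
    have hi : (i : ℕ) < n := i.isLt
    show revPrefix n b i - revPrefix n b ((i : ℕ) + 1) = -a i.rev
    simp only [revPrefix]
    rw [if_pos (by omega : (i : ℕ) ≤ n), if_pos (by omega : (i : ℕ) + 1 ≤ n)]
    have h1 : n - (i : ℕ) = n - ((i : ℕ) + 1) + 1 := by omega
    have h2 : b (n - ((i : ℕ) + 1)) - b (n - ((i : ℕ) + 1) + 1)
        = a ⟨n - ((i : ℕ) + 1), by omega⟩ := key _ (by omega)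
    have h3 : i.rev = ⟨n - ((i : ℕ) + 1), by omega⟩ := Fin.ext (Fin.val_rev i)
    rw [h1, h3]
    linarith [h2]
  refine ⟨s, hlen, hleg, by rw [hplay, hfinal], ?_⟩
  intro j
  rw [hplay, hfinal]
  simp only [neg_nonpos]
  exact (ha j.rev).le
end

section
/- Consider the numbers game on the cycle on 3 nodes where firing the left node c with value c > 0 adds q₁c to the top node and q₂c to the bottom node, and the top/bottom nodes are joined with amplitudes p₁, q₁, p₂, q₂ as specified. Define κ(a,b,c) = (p₁+p₂−1/q₂)a + (p₁+p₂−1/q₁)b + c. If a ≥ 0, b ≥ 0, c ≤ 0, κ > 0, and all amplitude products equal 1 except the products p₁q₁ ≥ 1 and p₂q₂ ≥ 1 with p₂q₂ > 1 (so Q := q₁(p₂−1/q₂)+q₂(p₁−1/q₁)+(p₁q₁+p₂q₂−1) > 0), then after the firing sequence described (fire the two right nodes until neither is positive, then fire the left node), the resulting position (a₁,b₁,c₁) again satisfies a₁ > 0, b₁ > 0, c₁ < 0 and κ(a₁,b₁,c₁) > 0, where a₁ = q₁(κ + a/q₂), b₁ = q₂(κ + b/q₁), c₁ = −κ − a/q₂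 − b/q₁. -/
/-- Numbers game on the three-node cycle with amplitude pairs `(p₁,q₁)` and
`(p₂,q₂)` on the edges from the left node to the top and bottom nodes.  With
`κ(a,b,c) = (p₁+p₂−1/q₂)a + (p₁+p₂−1/q₁)b + c`: if `a ≥ 0`, `b ≥ 0`, `c ≤ 0`,
`κ > 0`, `p₁q₁ ≥ 1`, `p₂q₂ ≥ 1` and `p₂q₂ > 1`, then the position
`(a₁,b₁,c₁) = (q₁(κ + a/q₂), q₂(κ + b/q₁), −κ − a/q₂ − b/q₁)` obtained by the
firing sequence (fire the two right nodes until neither is positive, then the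
left node) again satisfies `a₁ > 0`, `b₁ > 0`, `c₁ < 0` and `κ(a₁,b₁,c₁) > 0`. -/
theorem stmt18 (p₁ p₂ q₁ q₂ a b c : ℝ)
    (hp₁ : 0 < p₁) (hp₂ : 0 < p₂) (hq₁ : 0 < q₁) (hq₂ : 0 < q₂)
    (h₁ : 1 ≤ p₁ * q₁) (h₂ : 1 ≤ p₂ * q₂) (h₂' : 1 < p₂ * q₂)
    (ha : 0 ≤ a) (hb : 0 ≤ b) (hc : c ≤ 0)
    (hκ : 0 < (p₁ + p₂ - 1 / q₂) * a + (p₁ + p₂ - 1 / q₁) * b + c) :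
    0 < q₁ * (((p₁ + p₂ - 1 / q₂) * a + (p₁ + p₂ - 1 / q₁) * b + c) + a / q₂) ∧
    0 < q₂ * (((p₁ + p₂ - 1 / q₂) * a + (p₁ + p₂ - 1 / q₁) * b + c) + b / q₁) ∧
    (-((p₁ + p₂ - 1 / q₂) * a + (p₁ + p₂ - 1 / q₁) * b + c) - a / q₂ - b / q₁ < 0) ∧
    0 < (p₁ + p₂ - 1 / q₂) *
          (q₁ * (((p₁ + p₂ - 1 / q₂) * a + (p₁ + p₂ - 1 / q₁) * b + c) + a / q₂)) +
        (p₁ + p₂ - 1 / q₁) *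
          (q₂ * (((p₁ + p₂ - 1 / q₂) * a + (p₁ + p₂ - 1 / q₁) * b + c) + b / q₁)) +
        (-((p₁ + p₂ - 1 / q₂) * a + (p₁ + p₂ - 1 / q₁) * b + c) - a / q₂ - b / q₁) := by
  have hnn : ∀ x y : ℝ, 0 < y → 0 ≤ x * y → 0 ≤ x := by
    intro x y hy h
    exact le_of_mul_le_mul_right (by simpa using h) hy
  have ha2 : 0 ≤ a / q₂ := div_nonneg ha hq₂.le
  have hb2 : 0 ≤ b / q₁ := div_nonneg hb hq₁.le
  obtain ⟨K, hK⟩ : ∃ K : ℝ, K = (p₁ + p₂ - 1 / q₂) * a + (p₁ + p₂ - 1 / q₁) * b + c :=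
    ⟨_, rfl⟩
  rw [← hK] at hκ ⊢
  have h1 : 0 < K + a / q₂ := by linarith
  have h2 : 0 < K + b / q₁ := by linarith
  refine ⟨mul_pos hq₁ h1, mul_pos hq₂ h2, by linarith, ?_⟩
  have hQ : 0 < q₁ * (p₁ + p₂ - 1 / q₂) + q₂ * (p₁ + p₂ - 1 / q₁) - 1 := by
    have hid : (q₁ * (p₁ + p₂ - 1 / q₂) + q₂ * (p₁ + p₂ - 1 / q₁) - 1) * (q₁ * q₂)
        = q₁ * q₂ * (p₁ * q₁ + p₂ * q₂ - 1) + q₁ ^ 2 * (p₂ * q₂ - 1)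
          + q₂ ^ 2 * (p₁ * q₁ - 1) := by
      field_simp
      ring
    have hpos : 0 < (q₁ * (p₁ + p₂ - 1 / q₂) + q₂ * (p₁ + p₂ - 1 / q₁) - 1) * (q₁ * q₂) := by
      rw [hid]
      nlinarith [sq_nonneg q₁, sq_nonneg q₂, mul_pos hq₁ hq₂]
    by_contra h
    push_neg at h
    nlinarith [mul_pos hq₁ hq₂]
  have hQ1 : 0 ≤ (q₁ * (p₁ + p₂ - 1 / q₂) - 1) / q₂ := by
    apply div_nonneg _ hq₂.le
    apply hnn _ q₂ hq₂
    have hid : (q₁ * (p₁ + p₂ - 1 / q₂) - 1) * q₂ = q₂ * (p₁ * q₁ - 1) + q₁ * (p₂ * q₂ - 1) := by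
      field_simp
      ring
    rw [hid]
    nlinarith
  have hQ2 : 0 ≤ (q₂ * (p₁ + p₂ - 1 / q₁) - 1) / q₁ := by
    apply div_nonneg _ hq₁.le
    apply hnn _ q₁ hq₁
    have hid : (q₂ * (p₁ + p₂ - 1 / q₁) - 1) * q₁ = q₁ * (p₂ * q₂ - 1) + q₂ * (p₁ * q₁ - 1) := by
      field_simp
      ring
    rw [hid]
    nlinarith
  have key : (p₁ + p₂ - 1 / q₂) * (q₁ * (K + a / q₂)) +
      (p₁ + p₂ - 1 / q₁) * (q₂ * (K + b / q₁)) + (-K - a / q₂ - b / q₁)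
      = (q₁ * (p₁ + p₂ - 1 / q₂) + q₂ * (p₁ + p₂ - 1 / q₁) - 1) * K
        + ((q₁ * (p₁ + p₂ - 1 / q₂) - 1) / q₂) * a
        + ((q₂ * (p₁ + p₂ - 1 / q₁) - 1) / q₁) * b := by
    field_simp
    ring
  rw [key]
  have t1 := mul_pos hQ hκ
  have t2 := mul_nonneg hQ1 ha
  have t3 := mul_nonneg hQ2 hb
  linarith
end

section
/- Let M be an E-GCM whose associated matrix A = 2I − M is nonnegative and whose graph is connected, and suppose there exists a positive vector ν with Aν = ρν for some ρ ≥ 2. Then from any position λ with νᵀλ > 0 from which some node can be legally fired, every game sequence is infinite (the numbers game never terminates). -/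
/-!
Firing node `i` changes the linear functional `ν ⬝ᵥ λ` by `-λᵢ (Mν)ᵢ`. When `A = 2I - M` has
`ν > 0` as an eigenvector for an eigenvalue `ρ ≥ 2`, we get `Mν = (2 - ρ)ν ≤ 0`, so every legal
firing (`λᵢ > 0`) can only increase `ν ⬝ᵥ λ`. Starting from `ν ⬝ᵥ λ > 0`, the functional therefore
stays positive along any legal game sequence, which forces a positive coordinate at every stage.
-/

open Matrix

namespace NumbersGame

variable {n : ℕ}

theorem dotProduct_fireR (M : Matrix (Fin n) (Fin n) ℝ) (ν lam : Fin n → ℝ) (i : Fin n) :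
    ν ⬝ᵥ fireR M i lam = ν ⬝ᵥ lam - lam i * (M *ᵥ ν) i := by
  simp only [dotProduct, fireR, Matrix.mulVec, mul_sub, Finset.sum_sub_distrib, Finset.mul_sum]
  congr 1
  exact Finset.sum_congr rfl fun j _ => by ring

theorem dotProduct_le_dotProduct_fireR {M : Matrix (Fin n) (Fin n) ℝ} {ν : Fin n → ℝ}
    (hMν : ∀ j, (M *ᵥ ν) j ≤ 0) {lam : Fin n → ℝ} {i : Fin n} (hi : 0 < lam i) :
    ν ⬝ᵥ lam ≤ ν ⬝ᵥ fireR M i lam := by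
  rw [dotProduct_fireR]
  nlinarith [hMν i]

theorem dotProduct_le_dotProduct_playSeqR {M : Matrix (Fin n) (Fin n) ℝ} {ν : Fin n → ℝ}
    (hMν : ∀ j, (M *ᵥ ν) j ≤ 0) :
    ∀ (lam : Fin n → ℝ) (s : List (Fin n)), legalSeqR M lam s →
      ν ⬝ᵥ lam ≤ ν ⬝ᵥ playSeqR M lam s
  | _, [], _ => le_rfl
  | lam, i :: s, ⟨hi, hs⟩ =>
    (dotProduct_le_dotProduct_fireR hMν hi).trans
      (dotProduct_le_dotProduct_playSeqR hMν (fireR M i lam) s hs)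

theorem exists_pos_of_dotProduct_pos {ν x : Fin n → ℝ} (hν : ∀ j, 0 ≤ ν j)
    (h : 0 < ν ⬝ᵥ x) : ∃ j, 0 < x j := by
  by_contra! hx
  have : ν ⬝ᵥ x ≤ 0 :=
    Finset.sum_nonpos fun j _ => mul_nonpos_of_nonneg_of_nonpos (hν j) (hx j)
  linarith

theorem mulVec_eq_of_eigenvector {M A : Matrix (Fin n) (Fin n) ℝ}
    (hA : A = 2 • (1 : Matrix (Fin n) (Fin n) ℝ) - M) {ν : Fin n → ℝ} {ρ : ℝ}
    (heig : A *ᵥ ν = ρ • ν) : M *ᵥ ν = (2 - ρ) • ν := by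
  have hM : M = 2 • (1 : Matrix (Fin n) (Fin n) ℝ) - A := by rw [hA, sub_sub_cancel]
  rw [hM, Matrix.sub_mulVec, heig, Matrix.smul_mulVec, Matrix.one_mulVec, sub_smul, two_smul,
    two_smul]

end NumbersGame

open NumbersGame in
theorem stmt19_general {n : ℕ} (M A : Matrix (Fin n) (Fin n) ℝ)
    (hA : A = 2 • (1 : Matrix (Fin n) (Fin n) ℝ) - M)
    (ν : Fin n → ℝ) (hν : ∀ i, 0 < ν i)
    (ρ : ℝ) (hρ : 2 ≤ ρ) (heig : A.mulVec ν = ρ • ν)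
    (lam : Fin n → ℝ) (hpos : 0 < dotProduct ν lam) :
    ∀ s : List (Fin n), legalSeqR M lam s → ∃ j, 0 < playSeqR M lam s j := by
  have hMν : ∀ j, (M *ᵥ ν) j ≤ 0 := fun j => by
    rw [mulVec_eq_of_eigenvector hA heig, Pi.smul_apply, smul_eq_mul]
    exact mul_nonpos_of_nonpos_of_nonneg (by linarith) (hν j).le
  intro s hs
  exact exists_pos_of_dotProduct_pos (fun j => (hν j).le)
    (hpos.trans_le (dotProduct_le_dotProduct_playSeqR hMν lam s hs))

/-- Let `M` be an E-GCM whose associated matrix `A = 2I − M` is nonnegative with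
connected graph, and suppose there is a positive vector `ν` with `Aν = ρν` for
some `ρ ≥ 2`.  Then from any position `λ` with `νᵀλ > 0` from which some node can
be legally fired, the numbers game never terminates: after any legal firing
sequence some coordinate remains positive. -/
theorem stmt19 {n : ℕ} (M A : Matrix (Fin n) (Fin n) ℝ)
    (hA : A = 2 • (1 : Matrix (Fin n) (Fin n) ℝ) - M)
    (hnn : ∀ i j, 0 ≤ A i j)
    (hconn : (SimpleGraph.fromRel (fun i j => A i j ≠ 0)).Connected)
    (ν : Fin n → ℝ) (hν : ∀ i, 0 < ν i)
    (ρ : ℝ) (hρ : 2 ≤ ρ) (heig : A.mulVec ν = ρ • ν)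
    (lam : Fin n → ℝ) (hpos : 0 < dotProduct ν lam)
    (hfire : ∃ i, 0 < lam i) :
    ∀ s : List (Fin n), legalSeqR M lam s → ∃ j, 0 < playSeqR M lam s j :=
  stmt19_general M A hA ν hν ρ hρ heig lam hpos
end
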